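/- Let $n \geq 3$ and let $L : (\mathbb{Z}/n\mathbb{Z})^d \to \{C, A, T\}$ be a labeling. The number of pairs $(x,v)$ with $v \in \{-1,0,1\}^d\setminus\{0\}$, $L(x) = A$, $L(x+v) \in \{C,T\}$ equals $3^{d-1} n^d$ if and only if $n$ is even and the set of points labeled $A$ equals $\{(x_1,\ldots,x_d) : x_r \equiv \epsilon \pmod 2\}$ for some $r \in \{1,\ldots,d\}$ and $\epsilon \in \{0,1\}$. -/

import Mathlib

/-!
Let `u = ±1` be the sign of the labelling (`+1` on `A`) and `R v = ∑ₓ u x * u (x + v)` its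
autocorrelation. Counting gives `4 · #(pairs) = 3ᵈ nᵈ - ∑_{v ∈ {-1,0,1}ᵈ} R v`, so the claim is
that `Q u = ∑_{v ∈ {-1,0,1}ᵈ} R v + 3ᵈ⁻¹ R 0` is `≥ 0`, with equality exactly for the parity
labellings. For `S ⊆ [d]` let `g_S x` be the Walsh coefficient at `S` of the restriction of `u`
to the unit cube `x + {0,1}ᵈ`. Then `∑_S c_S ‖g_S‖² = 4ᵈ Q u` with weights
`c_S = 3ᵈ⁻¹ + (-1)^|S| 3^(d-|S|)`, which are nonnegative and vanish only for `|S| = 1`. Hence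
`Q u = 0` forces every local cube function to have its Walsh spectrum on singletons, i.e. to be
`±` a dictator `W ↦ (-1)^(W r)`. Neighbouring cubes overlap, so `r` is the same everywhere: `u`
changes sign along `e_r` and is invariant along the other axes, which forces `n` to be even and
`u x = ±(-1)^(x r)`.
-/

open Finset

inductive Letter | C | A | T
deriving DecidableEq

section Autocorrelation

variable {G R : Type*} [AddCommGroup G] [Fintype G] [CommRing R]

def autocorr (u : G → R) (v : G) : R := ∑ x, u x * u (x + v)

lemma sum_mul_shift_eq_autocorr (u : G → R) (w w' : G) :
    ∑ x, u (x + w) * u (x + w') = autocorr u (w' - w) :=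
  Fintype.sum_equiv (Equiv.addRight w) _ _ fun x => by simp [add_assoc]

lemma autocorr_zero_of_sq_eq_one {u : G → R} (hu : ∀ x, u x = 1 ∨ u x = -1) :
    autocorr u 0 = Fintype.card G := by
  have hsq : ∀ x, u x * u x = 1 := fun x => by rcases hu x with h | h <;> simp [h]
  simp [autocorr, hsq]

lemma sum_one_add_mul_one_sub_shift (u : G → R) (v : G) :
    ∑ x, (1 + u x) * (1 - u (x + v)) = Fintype.card G - autocorr u v := by
  have hshift : ∑ x, u (x + v) = ∑ x, u x := Equiv.sum_comp (Equiv.addRight v) u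
  simp only [autocorr, mul_sub, add_mul, one_mul, mul_one, Finset.sum_sub_distrib,
    Finset.sum_add_distrib, hshift, Finset.sum_const, Finset.card_univ, nsmul_eq_mul]
  ring

lemma sum_sq_sum_mul_shift {ι : Type*} [Fintype ι] (u : G → R) (a : ι → R) (p : ι → G) :
    ∑ x, (∑ i, a i * u (x + p i)) ^ 2
      = ∑ i, ∑ i', a i * a i' * autocorr u (p i' - p i) := by
  have hexpand : ∀ x, (∑ i, a i * u (x + p i)) ^ 2
      = ∑ i, ∑ i', a i * a i' * (u (x + p i) * u (x + p i')) := fun x => by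
    rw [sq, Finset.sum_mul_sum]
    exact Finset.sum_congr rfl fun i _ => Finset.sum_congr rfl fun i' _ => by ring
  simp only [hexpand]
  rw [Finset.sum_comm]
  refine Finset.sum_congr rfl fun i _ => ?_
  rw [Finset.sum_comm]
  simp only [← Finset.mul_sum, sum_mul_shift_eq_autocorr]

end Autocorrelation

section ProductSums

variable {ι α β R : Type*} [Fintype ι] [DecidableEq ι] [Fintype α] [CommSemiring R]

lemma prod_sum_sum_eq_sum_sum_prod (g : ι → α → α → R) :
    ∏ j, ∑ a, ∑ b, g j a b = ∑ W : ι → α, ∑ W' : ι → α, ∏ j, g j (W j) (W' j) := by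
  rw [Fintype.prod_sum]
  exact Finset.sum_congr rfl fun W _ => Fintype.prod_sum _

variable [Fintype β] [DecidableEq β]

lemma sum_sum_prod_mul_eq_sum_fiber (k : α → α → R) (δ : α → α → β) (F : (ι → β) → R) :
    ∑ W : ι → α, ∑ W' : ι → α, (∏ j, k (W j) (W' j)) * F (fun j => δ (W j) (W' j))
      = ∑ v : ι → β, (∏ j, ∑ a, ∑ b, if δ a b = v j then k a b else 0) * F v := by
  simp_rw [prod_sum_sum_eq_sum_sum_prod, Fintype.prod_ite_zero, Finset.sum_mul]
  rw [eq_comm, Finset.sum_comm]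
  refine Finset.sum_congr rfl fun W _ => ?_
  rw [Finset.sum_comm]
  refine Finset.sum_congr rfl fun W' _ => ?_
  simp [← funext_iff, ite_mul, eq_comm]

lemma sum_prod_ite_mem_mul (T : Finset β) (c : R) (F : (ι → β) → R) :
    ∑ v : ι → β, (∏ j, if v j ∈ T then c else 0) * F v
      = c ^ Fintype.card ι * ∑ v ∈ Fintype.piFinset fun _ => T, F v := by
  simp only [Fintype.prod_ite_zero, Finset.prod_const, ite_mul, zero_mul, ← Finset.sum_filter,
    Finset.mul_sum, Finset.card_univ]
  congr 1
  ext v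
  simp [Fintype.mem_piFinset]

end ProductSums

lemma eq_of_forall_ne_iff {α : Type*} {a b k : α} (h : ∀ i, i ≠ k → (i = a ↔ i = b)) : a = b := by
  by_cases ha : a = k
  · by_cases hb : b = k
    · rw [ha, hb]
    · exact ((h b hb).2 rfl).symm
  · exact (h a ha).1 rfl

lemma apply_eq_apply_zero_of_add_single {ι β : Type*} [Fintype ι] [DecidableEq ι] {n : ℕ}
    [NeZero n] {f : (ι → ZMod n) → β} (hf : ∀ x k, f (x + Pi.single k 1) = f x)
    (x : ι → ZMod n) : f x = f 0 := by
  let H : AddSubmonoid (ι → ZMod n) :=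
    { carrier := {v | ∀ y, f (y + v) = f y}
      zero_mem' := by simp
      add_mem' := fun ha hb y => by rw [← add_assoc, hb, ha] }
  have hx : x ∈ H := by
    rw [← Finset.univ_sum_single x]
    refine H.sum_mem fun k _ => ?_
    rw [← ZMod.natCast_zmod_val (x k), ← nsmul_one, Pi.single_nsmul]
    exact H.nsmul_mem (hf · k) _
  simpa using hx 0

section BooleanCube

variable {ι : Type*} [Fintype ι]

def boolSign (b : Bool) : ℤ := if b then -1 else 1

def walsh (S W : ι → Bool) : ℤ := ∏ j, boolSign (S j && W j)

lemma sum_boolSign_mul_boolSign (a b : Bool) :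
    ∑ s, boolSign (s && a) * boolSign (s && b) = if a = b then 2 else 0 := by
  cases a <;> cases b <;> decide

lemma prod_ite_eq_two_zero (W W' : ι → Bool) :
    (∏ j, if W j = W' j then (2 : ℤ) else 0) = if W = W' then 2 ^ Fintype.card ι else 0 := by
  simp [Fintype.prod_ite_zero, funext_iff, Finset.card_univ]

variable [DecidableEq ι]

def boolSingle (r : ι) : ι → Bool := fun j => decide (j = r)

lemma sum_walsh_mul_walsh (W W' : ι → Bool) :
    ∑ S, walsh S W * walsh S W' = ∏ j, if W j = W' j then 2 else 0 := by
  simp only [walsh, ← Finset.prod_mul_distrib]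
  rw [← Fintype.prod_sum (fun j s => boolSign (s && W j) * boolSign (s && W' j))]
  simp only [sum_boolSign_mul_boolSign]

lemma walsh_inversion (f : (ι → Bool) → ℤ) (W : ι → Bool) :
    2 ^ Fintype.card ι * f W = ∑ S, walsh S W * ∑ W', walsh S W' * f W' := by
  simp only [Finset.mul_sum, ← mul_assoc]
  rw [Finset.sum_comm]
  simp [← Finset.sum_mul, sum_walsh_mul_walsh, prod_ite_eq_two_zero]

lemma walsh_boolSingle (r : ι) (W : ι → Bool) : walsh (boolSingle r) W = boolSign (W r) := by
  rw [walsh, Finset.prod_eq_single r (fun j _ hj => by simp [boolSingle, hj, boolSign])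
    (by simp)]
  simp [boolSingle]

lemma sum_eq_sum_boolSingle (F : (ι → Bool) → ℤ) (hF : ∀ S, #{j | S j} ≠ 1 → F S = 0) :
    ∑ S, F S = ∑ r, F (boolSingle r) := by
  have hinj : Function.Injective (boolSingle (ι := ι)) := fun r s h => by
    simpa [boolSingle] using congrFun h r
  rw [← Finset.sum_image fun r _ s _ h => hinj h]
  refine (Finset.sum_subset (Finset.subset_univ _) fun S _ hS => hF S fun hcard => hS ?_).symm
  obtain ⟨r, hr⟩ := Finset.card_eq_one.1 hcard
  refine Finset.mem_image.2 ⟨r, Finset.mem_univ r, funext fun j => ?_⟩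
  have := Finset.ext_iff.1 hr j
  simp only [Finset.mem_filter, Finset.mem_univ, true_and, Finset.mem_singleton] at this
  simp [boolSingle, ← this]

lemma sum_boolSign_boolSingle_mul (a : ι → ℤ) (s : ι) :
    ∑ r, boolSign (boolSingle s r) * a r = ∑ r, a r - 2 * a s := by
  have : ∀ r, boolSign (boolSingle s r) * a r = a r - 2 * if s = r then a r else 0 := fun r => by
    by_cases h : s = r <;> simp [boolSign, boolSingle, h, eq_comm]
    ring
  simp [this, Finset.sum_sub_distrib]

lemma exists_eq_ite_of_sum_eq {a : ι → ℤ} {c : ℤ} (hc : c ≠ 0) (ha : ∀ s, a s = 0 ∨ a s = c)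
    (hsum : ∑ s, a s = c) : ∃ r, ∀ s, a s = if s = r then c else 0 := by
  obtain ⟨r, hr⟩ : ∃ r, ({s | a s ≠ 0} : Finset ι) = {r} := by
    refine Finset.card_eq_one.1 (Nat.cast_injective (R := ℤ) (mul_left_injective₀ hc ?_))
    rw [← Finset.sum_filter_ne_zero, Finset.sum_congr rfl fun s hs =>
      (ha s).resolve_left (Finset.mem_filter.1 hs).2, Finset.sum_const, nsmul_eq_mul] at hsum
    simpa using hsum
  refine ⟨r, fun s => ?_⟩
  have hs := Finset.ext_iff.1 hr s
  simp only [Finset.mem_filter, Finset.mem_univ, true_and, Finset.mem_singleton] at hs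
  split_ifs with h
  · exact (ha s).resolve_left (hs.2 h)
  · exact not_not.1 (mt hs.1 h)

theorem exists_eq_mul_boolSign_of_walsh_eq_zero (f : (ι → Bool) → ℤ)
    (hf : ∀ W, f W = 1 ∨ f W = -1) (h : ∀ S, #{j | S j} ≠ 1 → ∑ W, walsh S W * f W = 0) :
    ∃ r, ∀ W, f W = f (fun _ => false) * boolSign (W r) := by
  set N : ℤ := 2 ^ Fintype.card ι
  have hN : N ≠ 0 := by positivity
  set a : ι → ℤ := fun r => ∑ W, walsh (boolSingle r) W * f W
  set c := N * f (fun _ => false)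
  have hinv : ∀ W, N * f W = ∑ r, boolSign (W r) * a r := fun W => by
    rw [walsh_inversion, sum_eq_sum_boolSingle _ fun S hS => by rw [h S hS, mul_zero]]
    simp only [walsh_boolSingle, a]
  have hsum : ∑ r, a r = c := by simpa [boolSign] using (hinv fun _ => false).symm
  -- Comparing `hinv` at `W = ∅` and at `W = {s}` gives `2 * a s = N * (f ∅ - f {s})`.
  have ha : ∀ s, a s = 0 ∨ a s = c := fun s => by
    have hs := hinv (boolSingle s)
    rw [sum_boolSign_boolSingle_mul, hsum] at hs
    rcases hf (boolSingle s) with h1 | h1 <;> rcases hf (fun _ => false) with h2 | h2 <;>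
      simp only [c, h1, h2] at hs ⊢ <;> first | (left; linarith) | (right; linarith)
  have hc : c ≠ 0 := mul_ne_zero hN (by rcases hf (fun _ => false) with h | h <;> simp [h])
  obtain ⟨r, hr⟩ := exists_eq_ite_of_sum_eq hc ha hsum
  refine ⟨r, fun W => mul_left_cancel₀ hN ?_⟩
  rw [hinv, Finset.sum_congr rfl fun s _ => by rw [hr s]]
  simp [c]
  ring

end BooleanCube

section Torus

variable {n d : ℕ}

lemma ZMod.one_ne_zero_of_two_le (hn : 2 ≤ n) : (1 : ZMod n) ≠ 0 := by
  have : Fact (1 < n) := ⟨hn⟩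
  exact one_ne_zero

lemma ZMod.one_ne_neg_one_of_three_le (hn : 3 ≤ n) : (1 : ZMod n) ≠ -1 := by
  have : Fact (2 < n) := ⟨hn⟩
  exact ZMod.neg_one_ne_one.symm

lemma card_zero_one_neg_one (hn : 3 ≤ n) : #({0, 1, -1} : Finset (ZMod n)) = 3 := by
  have h1 := ZMod.one_ne_zero_of_two_le (by omega : 2 ≤ n)
  rw [Finset.card_insert_of_notMem (by simp [h1.symm, (neg_ne_zero.2 h1).symm]),
    Finset.card_pair (ZMod.one_ne_neg_one_of_three_le hn)]

/-- The connection set `{-1, 0, 1}ᵈ \ {0}` of the Cayley graph, together with `0`. -/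
def kingBox (n d : ℕ) : Finset (Fin d → ZMod n) := Fintype.piFinset fun _ => {0, 1, -1}

lemma card_kingBox (hn : 3 ≤ n) : #(kingBox n d) = 3 ^ d := by
  simp [kingBox, Fintype.card_piFinset, card_zero_one_neg_one hn]

def cubePoint (W : Fin d → Bool) : Fin d → ZMod n := fun j => if W j then 1 else 0

lemma cubePoint_false : cubePoint (n := n) (fun _ : Fin d => false) = 0 := by
  funext j; simp [cubePoint]

lemma cubePoint_boolSingle (i : Fin d) : cubePoint (n := n) (boolSingle i) = Pi.single i 1 := by
  funext j; simp [cubePoint, boolSingle, Pi.single_apply]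

lemma cubePoint_boolSingle_or {i k : Fin d} (hik : i ≠ k) :
    cubePoint (n := n) (fun j => boolSingle k j || boolSingle i j)
      = Pi.single k 1 + Pi.single i 1 := by
  funext j
  by_cases hj : j = k
  · subst hj; simp [cubePoint, boolSingle, Ne.symm hik]
  · simp [cubePoint, boolSingle, Pi.single_apply, hj]

def bitDiff (a b : Bool) : ZMod n := (if b then 1 else 0) - (if a then 1 else 0)

lemma sum_bitDiff_fiber (hn : 3 ≤ n) (m : ℤ) (c : ZMod n) :
    ∑ a, ∑ b, (if bitDiff a b = c then (if a = b then (2 : ℤ) else m) else 0)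
      = if c = 0 then 4 else if c = 1 ∨ c = -1 then m else 0 := by
  have h1 := ZMod.one_ne_zero_of_two_le (by omega : 2 ≤ n)
  have h2 := ZMod.one_ne_neg_one_of_three_le hn
  have h3 : (-1 : ZMod n) ≠ 0 := neg_ne_zero.2 h1
  simp only [Fintype.sum_bool, bitDiff, if_true, sub_self]
  by_cases hc0 : c = 0
  · subst hc0; simp [h1, h3]
  by_cases hc1 : c = 1
  · subst hc1; simp [h1, h1.symm, h2, h2.symm]
  by_cases hc2 : c = -1
  · subst hc2; simp [h1, h2, h3, h2.symm]
  simp [hc0, hc1, hc2, Ne.symm hc0, Ne.symm hc1, Ne.symm hc2]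

/-- Per coordinate, `4 (1 + 2 cos θ) = 3 |1 + e^{iθ}|² - |1 - e^{iθ}|²`; the product is the
resulting weight of the square of the Walsh coefficient at `S`. -/
def sosWeight (S : Fin d → Bool) : ℤ := 3 ^ (d - 1) + ∏ j, if S j then -1 else 3

lemma prod_ite_neg_one_three (S : Fin d → Bool) :
    ∏ j, (if S j then (-1 : ℤ) else 3) = (-1) ^ #{j | S j} * 3 ^ (d - #{j | S j}) := by
  rw [Finset.prod_ite, Finset.prod_const, Finset.prod_const, Finset.filter_not,
    Finset.card_sdiff_of_subset (Finset.filter_subset _ _)]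
  simp

lemma sosWeight_pos (S : Fin d → Bool) (hS : #{j | S j} ≠ 1) : 0 < sosWeight S := by
  rw [sosWeight, prod_ite_neg_one_three]
  set k := #{j | S j}
  have hkd : k ≤ d := (Finset.card_filter_le _ _).trans (by simp)
  rcases Nat.eq_zero_or_pos k with h | h
  · simp [h]; positivity
  · have : (3 : ℤ) ^ (d - k) < 3 ^ (d - 1) := pow_lt_pow_right₀ (by norm_num) (by omega)
    rcases neg_one_pow_eq_or ℤ k with h' | h' <;> rw [h'] <;>
      linarith [pow_pos (three_pos (α := ℤ)) (d - k)]

lemma sosWeight_nonneg (S : Fin d → Bool) : 0 ≤ sosWeight S := by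
  by_cases hS : #{j | S j} = 1
  · simp [sosWeight, prod_ite_neg_one_three, hS]
  · exact (sosWeight_pos S hS).le

lemma sum_sosWeight_mul_walsh_mul_walsh (W W' : Fin d → Bool) :
    ∑ S, sosWeight S * (walsh S W * walsh S W')
      = 3 ^ (d - 1) * (∏ j, if W j = W' j then 2 else 0)
        + ∏ j, if W j = W' j then 2 else 4 := by
  have hweighted : ∑ S : Fin d → Bool,
      (∏ j, if S j then (-1 : ℤ) else 3) * (walsh S W * walsh S W')
        = ∏ j, if W j = W' j then 2 else 4 := by
    simp only [walsh, ← Finset.prod_mul_distrib]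
    rw [← Fintype.prod_sum fun j (s : Bool) =>
      (if s then (-1 : ℤ) else 3) * (boolSign (s && W j) * boolSign (s && W' j))]
    congr 1
    funext j
    cases W j <;> cases W' j <;> decide
  simp only [sosWeight, add_mul, Finset.sum_add_distrib, ← Finset.mul_sum,
    sum_walsh_mul_walsh, hweighted]

def localWalsh (u : (Fin d → ZMod n) → ℤ) (S : Fin d → Bool) (x : Fin d → ZMod n) : ℤ :=
  ∑ W, walsh S W * u (x + cubePoint W)

lemma exists_dictator_of_localWalsh_eq_zero {u : (Fin d → ZMod n) → ℤ}
    (hu : ∀ x, u x = 1 ∨ u x = -1) (x : Fin d → ZMod n)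
    (hx : ∀ S, #{j | S j} ≠ 1 → localWalsh u S x = 0) :
    ∃ r, ∀ W, u (x + cubePoint W) = u x * boolSign (W r) := by
  obtain ⟨r, hr⟩ := exists_eq_mul_boolSign_of_walsh_eq_zero (fun W => u (x + cubePoint W))
    (fun W => hu _) hx
  exact ⟨r, by simpa [cubePoint_false] using hr⟩

-- Compare `u (x + e_k + e_i)` read off the cube at `x` with its value read off the cube at
-- `x + e_k`.
lemma dictator_direction_eq {u : (Fin d → ZMod n) → ℤ} (hu : ∀ x, u x = 1 ∨ u x = -1)
    {x : Fin d → ZMod n} {k r r' : Fin d}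
    (hx : ∀ W, u (x + cubePoint W) = u x * boolSign (W r))
    (hy : ∀ W, u (x + Pi.single k 1 + cubePoint W) = u (x + Pi.single k 1) * boolSign (W r')) :
    r = r' := by
  refine eq_of_forall_ne_iff (k := k) fun i hik => ?_
  have hpair := hx (fun j => boolSingle k j || boolSingle i j)
  have hi := hy (boolSingle i)
  have hk := hx (boolSingle k)
  rw [cubePoint_boolSingle_or hik, ← add_assoc] at hpair
  rw [cubePoint_boolSingle] at hi hk
  rw [hi, hk, mul_assoc] at hpair
  have hux : u x ≠ 0 := by rcases hu x with h | h <;> simp [h]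
  have hsign := mul_left_cancel₀ hux hpair
  simp only [boolSingle, boolSign] at hsign
  by_cases h1 : r = i <;> by_cases h2 : r' = i <;> by_cases h3 : r = k <;>
    simp [h1, h2, h3, hik, eq_comm] at hsign ⊢

def parity (a : ZMod n) : ℤ := (-1) ^ a.val

lemma parity_zero : parity (0 : ZMod n) = 1 := by
  simp [parity]

lemma parity_one (hn : 2 ≤ n) : parity (1 : ZMod n) = -1 := by
  have : Fact (1 < n) := ⟨hn⟩
  simp [parity, ZMod.val_one]

lemma parity_mul_self (a : ZMod n) : parity a * parity a = 1 := by
  rw [parity, ← pow_add, ← two_mul, pow_mul]; simp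

lemma parity_eq_ite (a : ZMod n) : parity a = if a.val % 2 = 0 then 1 else -1 := by
  rw [parity, neg_one_pow_eq_pow_mod_two]
  rcases Nat.mod_two_eq_zero_or_one a.val with h | h <;> simp [h]

lemma even_of_add_single_eq_neg {u : (Fin d → ZMod n) → ℤ} (hu0 : u 0 ≠ 0) {r : Fin d}
    (h : ∀ x, u (x + Pi.single r 1) = -u x) : Even n := by
  have hm : ∀ m : ℕ, u (m • Pi.single r 1) = (-1) ^ m * u 0 := fun m => by
    induction m with
    | zero => simp
    | succ m ih => rw [succ_nsmul, h, ih, pow_succ]; ring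
  have hn := hm n
  rw [← Pi.single_nsmul, nsmul_eq_mul, mul_one, ZMod.natCast_self, Pi.single_zero] at hn
  exact (neg_one_pow_eq_one_iff_even (by norm_num)).1 ((mul_eq_right₀ hu0).1 hn.symm)

variable [NeZero n]

theorem sum_sosWeight_mul_sum_sq_localWalsh (hn : 3 ≤ n) (u : (Fin d → ZMod n) → ℤ) :
    ∑ S, sosWeight S * ∑ x, localWalsh u S x ^ 2
      = 4 ^ d * (∑ v ∈ kingBox n d, autocorr u v + 3 ^ (d - 1) * autocorr u 0) := by
  have hdiff : ∀ W W' : Fin d → Bool,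
      cubePoint W' - cubePoint W = fun j => (bitDiff (W j) (W' j) : ZMod n) := fun W W' => rfl
  have hfiber₀ : ∀ c : ZMod n,
      ∑ a, ∑ b, (if bitDiff a b = c then (if a = b then (2 : ℤ) else 0) else 0)
        = if c ∈ ({0} : Finset _) then 4 else 0 := fun c => by
    rw [sum_bitDiff_fiber hn]; simp
  have hfiber₄ : ∀ c : ZMod n,
      ∑ a, ∑ b, (if bitDiff a b = c then (if a = b then (2 : ℤ) else 4) else 0)
        = if c ∈ ({0, 1, -1} : Finset _) then 4 else 0 := fun c => by
    rw [sum_bitDiff_fiber hn]; simp only [Finset.mem_insert, Finset.mem_singleton]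
    split_ifs <;> tauto
  calc ∑ S, sosWeight S * ∑ x, localWalsh u S x ^ 2
      = ∑ W, ∑ W', (∑ S, sosWeight S * (walsh S W * walsh S W'))
          * autocorr u (fun j => bitDiff (W j) (W' j)) := by
        simp only [localWalsh, sum_sq_sum_mul_shift, hdiff, Finset.mul_sum, Finset.sum_mul]
        rw [Finset.sum_comm]
        refine Finset.sum_congr rfl fun W _ => ?_
        rw [Finset.sum_comm]
        exact Finset.sum_congr rfl fun W' _ => Finset.sum_congr rfl fun S _ => by ring
    _ = 3 ^ (d - 1) * ∑ W : Fin d → Bool, ∑ W' : Fin d → Bool,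
          (∏ j, if W j = W' j then (2 : ℤ) else 0) * autocorr u (fun j => bitDiff (W j) (W' j))
        + ∑ W : Fin d → Bool, ∑ W' : Fin d → Bool, (∏ j, if W j = W' j then (2 : ℤ) else 4)
          * autocorr u (fun j => bitDiff (W j) (W' j)) := by
        simp only [sum_sosWeight_mul_walsh_mul_walsh, add_mul, Finset.sum_add_distrib,
          Finset.mul_sum, mul_assoc]
    _ = _ := by
        rw [sum_sum_prod_mul_eq_sum_fiber (fun a b => if a = b then (2 : ℤ) else 0),
          sum_sum_prod_mul_eq_sum_fiber (fun a b => if a = b then (2 : ℤ) else 4)]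
        simp only [hfiber₀, hfiber₄, sum_prod_ite_mem_mul, Fintype.card_fin]
        simp [← Pi.zero_def, kingBox]
        ring

lemma localWalsh_eq_zero_of_sum_kingBox (hn : 3 ≤ n) {u : (Fin d → ZMod n) → ℤ}
    (hQ : ∑ v ∈ kingBox n d, autocorr u v + 3 ^ (d - 1) * autocorr u 0 = 0)
    (S : Fin d → Bool) (hS : #{j | S j} ≠ 1) (x : Fin d → ZMod n) : localWalsh u S x = 0 := by
  have hsum := sum_sosWeight_mul_sum_sq_localWalsh hn u
  rw [hQ, mul_zero] at hsum
  have hterm := (Finset.sum_eq_zero_iff_of_nonneg fun S _ => mul_nonneg (sosWeight_nonneg S)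
    (Finset.sum_nonneg fun x _ => sq_nonneg _)).1 hsum S (mem_univ S)
  have hsq := (mul_eq_zero.1 hterm).resolve_left (sosWeight_pos S hS).ne'
  exact pow_eq_zero_iff two_ne_zero |>.1 <|
    (Finset.sum_eq_zero_iff_of_nonneg fun x _ => sq_nonneg _).1 hsq x (mem_univ x)

theorem exists_forall_dictator {u : (Fin d → ZMod n) → ℤ} (hu : ∀ x, u x = 1 ∨ u x = -1)
    (hloc : ∀ x, ∃ r, ∀ W, u (x + cubePoint W) = u x * boolSign (W r)) :
    ∃ r, ∀ x W, u (x + cubePoint W) = u x * boolSign (W r) := by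
  choose r hr using hloc
  have hconst : ∀ x k, r (x + Pi.single k 1) = r x := fun x k =>
    (dictator_direction_eq hu (hr x) (hr _)).symm
  exact ⟨r 0, fun x => apply_eq_apply_zero_of_add_single hconst x ▸ hr x⟩

lemma parity_add (hE : Even n) (a b : ZMod n) : parity (a + b) = parity a * parity b := by
  rw [parity, ZMod.val_add, neg_one_pow_eq_pow_mod_two, Nat.mod_mod_of_dvd _ hE.two_dvd,
    ← neg_one_pow_eq_pow_mod_two, pow_add, parity, parity]

lemma eq_mul_parity_of_add_single {u : (Fin d → ZMod n) → ℤ} (hE : Even n) {r : Fin d}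
    (h : ∀ x i, u (x + Pi.single i 1) = u x * boolSign (boolSingle i r)) (x : Fin d → ZMod n) :
    u x = u 0 * parity (x r) := by
  have hn : 2 ≤ n := by
    obtain ⟨m, hm⟩ := hE
    have := NeZero.ne n
    omega
  have hinv : ∀ (y : Fin d → ZMod n) (i : Fin d), u (y + Pi.single i 1)
      * parity ((y + Pi.single i 1 : Fin d → ZMod n) r) = u y * parity (y r) := by
    intro y i
    by_cases hi : i = r
    · subst hi
      simp [h, boolSign, boolSingle, parity_add hE, parity_one hn]
    · simp [h, boolSign, boolSingle, Ne.symm hi]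
  have := apply_eq_apply_zero_of_add_single (f := fun y => u y * parity (y r)) hinv x
  simp only [Pi.zero_apply, parity_zero, mul_one] at this
  rw [← this, mul_assoc, parity_mul_self, mul_one]

lemma sum_zero_one_neg_one_parity (hn : 3 ≤ n) (hE : Even n) :
    ∑ a ∈ ({0, 1, -1} : Finset (ZMod n)), parity a = -1 := by
  have h1 := ZMod.one_ne_zero_of_two_le (by omega : 2 ≤ n)
  have hneg : parity (-1 : ZMod n) = -1 := by
    have := parity_add hE (-1 : ZMod n) 1
    rw [neg_add_cancel, parity_one (by omega), parity_zero] at this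
    linarith
  rw [Finset.sum_insert (by simp [h1.symm, (neg_ne_zero.2 h1).symm]),
    Finset.sum_insert (by simp [ZMod.one_ne_neg_one_of_three_le hn]), Finset.sum_singleton, hneg,
    parity_one (by omega), parity_zero]
  norm_num

lemma sum_kingBox_parity (hn : 3 ≤ n) (hE : Even n) (r : Fin d) :
    ∑ v ∈ kingBox n d, parity (v r) = -3 ^ (d - 1) := by
  have hsingle : ∀ v : Fin d → ZMod n, parity (v r) = ∏ j, if j = r then parity (v j) else 1 :=
    fun v => by rw [Fintype.prod_ite_eq']
  have hcoord : ∀ j, ∑ a ∈ ({0, 1, -1} : Finset (ZMod n)), (if j = r then parity a else 1)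
      = if j = r then -1 else 3 := fun j => by
    split_ifs
    · exact sum_zero_one_neg_one_parity hn hE
    · simp [card_zero_one_neg_one hn]
  simp only [hsingle, kingBox]
  rw [← Finset.prod_univ_sum (fun _ => ({0, 1, -1} : Finset (ZMod n)))
    (fun j a => if j = r then parity a else 1)]
  simp only [hcoord]
  rw [← Finset.mul_prod_erase univ _ (mem_univ r),
    Finset.prod_congr rfl fun j hj => if_neg (Finset.ne_of_mem_erase hj)]
  simp

lemma autocorr_eq_of_eq_mul_parity {u : (Fin d → ZMod n) → ℤ} (hu : ∀ x, u x = 1 ∨ u x = -1)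
    (hE : Even n) {r : Fin d} (hr : ∀ x, u x = u 0 * parity (x r)) (v : Fin d → ZMod n) :
    autocorr u v = n ^ d * parity (v r) := by
  have hu0 : u 0 * u 0 = 1 := by rcases hu 0 with h0 | h0 <;> simp [h0]
  have hterm : ∀ x, u x * u (x + v) = parity (v r) := fun x => by
    rw [hr x, hr (x + v), Pi.add_apply, parity_add hE]
    linear_combination (parity (x r) * parity (x r) * parity (v r)) * hu0
      + parity (v r) * parity_mul_self (x r)
  simp [autocorr, hterm]

theorem sum_kingBox_autocorr_eq_iff (hn : 3 ≤ n) {u : (Fin d → ZMod n) → ℤ}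
    (hu : ∀ x, u x = 1 ∨ u x = -1) :
    ∑ v ∈ kingBox n d, autocorr u v = -(3 ^ (d - 1) * n ^ d)
      ↔ Even n ∧ ∃ r, ∀ x, u x = u 0 * parity (x r) := by
  constructor
  · intro h
    have hQ : ∑ v ∈ kingBox n d, autocorr u v + 3 ^ (d - 1) * autocorr u 0 = 0 := by
      simp [h, autocorr_zero_of_sq_eq_one hu]
    obtain ⟨r, hr⟩ := exists_forall_dictator hu fun x =>
      exists_dictator_of_localWalsh_eq_zero hu x fun S hS =>
        localWalsh_eq_zero_of_sum_kingBox hn hQ S hS x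
    have hstep : ∀ x i, u (x + Pi.single i 1) = u x * boolSign (boolSingle i r) := fun x i => by
      simpa [cubePoint_boolSingle] using hr x (boolSingle i)
    have hE : Even n := even_of_add_single_eq_neg (u := u)
      (by rcases hu 0 with h0 | h0 <;> simp [h0]) (r := r)
      fun x => by simpa [boolSingle, boolSign] using hstep x r
    exact ⟨hE, r, eq_mul_parity_of_add_single hE hstep⟩
  · rintro ⟨hE, r, hr⟩
    rw [Finset.sum_congr rfl fun v _ => autocorr_eq_of_eq_mul_parity hu hE hr v,
      ← Finset.mul_sum, sum_kingBox_parity hn hE]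
    ring

end Torus

section Labeling

variable {n d : ℕ}

def labelSign {X : Type*} (L : X → Letter) (x : X) : ℤ := if L x = Letter.A then 1 else -1

lemma labelSign_eq_one_or_neg_one {X : Type*} (L : X → Letter) (x : X) :
    labelSign L x = 1 ∨ labelSign L x = -1 := by
  unfold labelSign; split_ifs <;> simp

lemma labelSign_eq_mul_parity_iff (L : (Fin d → ZMod n) → Letter) (r : Fin d) :
    (∀ x, labelSign L x = labelSign L 0 * parity (x r))
      ↔ ∃ ε : ℕ, ε < 2 ∧ ∀ x : Fin d → ZMod n, L x = Letter.A ↔ (x r).val % 2 = ε := by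
  simp only [labelSign, parity_eq_ite]
  constructor
  · intro h
    refine ⟨if L 0 = Letter.A then 0 else 1, by split_ifs <;> norm_num, fun x => ?_⟩
    have hx := h x
    rcases Nat.mod_two_eq_zero_or_one (x r).val with hv | hv <;>
      by_cases hL0 : L 0 = Letter.A <;> by_cases hLx : L x = Letter.A <;> simp_all
  · rintro ⟨ε, hε, hL⟩ x
    have h0 := hL 0
    have hx := hL x
    simp only [Pi.zero_apply, ZMod.val_zero, Nat.zero_mod] at h0
    rcases Nat.mod_two_eq_zero_or_one (x r).val with hv | hv <;>
      interval_cases ε <;> simp_all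

variable [NeZero n]

lemma four_mul_card_eq (hn : 3 ≤ n) (L : (Fin d → ZMod n) → Letter) :
    4 * ((Finset.univ.filter
        (fun p : (Fin d → ZMod n) × (Fin d → ZMod n) =>
          (∀ j, p.2 j = 0 ∨ p.2 j = 1 ∨ p.2 j = -1) ∧ p.2 ≠ 0 ∧
          L p.1 = Letter.A ∧
          (L (p.1 + p.2) = Letter.C ∨ L (p.1 + p.2) = Letter.T))).card : ℤ)
      = 3 ^ d * n ^ d - ∑ v ∈ kingBox n d, autocorr (labelSign L) v := by
  have hind : ∀ x v : Fin d → ZMod n,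
      4 * (if (∀ j, v j = 0 ∨ v j = 1 ∨ v j = -1) ∧ v ≠ 0 ∧ L x = Letter.A ∧
          (L (x + v) = Letter.C ∨ L (x + v) = Letter.T) then (1 : ℤ) else 0)
        = (if v ∈ kingBox n d then 1 else 0)
          * ((1 + labelSign L x) * (1 - labelSign L (x + v))) := fun x v => by
    -- The right-hand side vanishes at `v = 0` by itself, so `v ≠ 0` comes for free.
    have hmem : v ∈ kingBox n d ↔ ∀ j, v j = 0 ∨ v j = 1 ∨ v j = -1 := by
      simp [kingBox, Fintype.mem_piFinset]
    simp only [hmem]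
    rcases eq_or_ne v 0 with rfl | hv
    · unfold labelSign; split_ifs <;> simp_all
    · unfold labelSign
      cases L x <;> cases L (x + v) <;> by_cases hb : ∀ j, v j = 0 ∨ v j = 1 ∨ v j = -1 <;>
        simp [hb, hv]
  rw [Finset.card_filter, Nat.cast_sum, Finset.mul_sum, Fintype.sum_prod_type]
  push_cast
  simp only [hind]
  rw [Finset.sum_comm]
  simp only [← Finset.mul_sum]
  simp only [sum_one_add_mul_one_sub_shift, boole_mul]
  rw [Finset.sum_ite_mem, Finset.univ_inter, Finset.sum_sub_distrib, Finset.sum_const,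
    card_kingBox hn]
  simp

lemma card_eq_iff_sum_kingBox_autocorr_eq (hn : 3 ≤ n) (hd : 0 < d)
    (L : (Fin d → ZMod n) → Letter) :
    (Finset.univ.filter
        (fun p : (Fin d → ZMod n) × (Fin d → ZMod n) =>
          (∀ j, p.2 j = 0 ∨ p.2 j = 1 ∨ p.2 j = -1) ∧ p.2 ≠ 0 ∧
          L p.1 = Letter.A ∧
          (L (p.1 + p.2) = Letter.C ∨ L (p.1 + p.2) = Letter.T))).card
      = 3 ^ (d - 1) * n ^ d
      ↔ ∑ v ∈ kingBox n d, autocorr (labelSign L) v = -(3 ^ (d - 1) * n ^ d) := by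
  have hcount := four_mul_card_eq hn L
  obtain ⟨e, rfl⟩ : ∃ e, d = e + 1 := ⟨d - 1, by omega⟩
  rw [Nat.add_sub_cancel] at *
  constructor
  · intro h
    rw [h] at hcount
    push_cast at hcount
    linear_combination hcount
  · intro h
    zify
    refine mul_left_cancel₀ (four_ne_zero (α := ℤ)) ?_
    rw [hcount, h]
    ring

end Labeling

theorem stmt_9 (n d : ℕ) [NeZero n] (hn : 3 ≤ n)
    (L : (Fin d → ZMod n) → Letter) :
    (Finset.univ.filter
        (fun p : (Fin d → ZMod n) × (Fin d → ZMod n) =>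
          (∀ j, p.2 j = 0 ∨ p.2 j = 1 ∨ p.2 j = -1) ∧ p.2 ≠ 0 ∧
          L p.1 = Letter.A ∧
          (L (p.1 + p.2) = Letter.C ∨ L (p.1 + p.2) = Letter.T))).card
      = 3 ^ (d - 1) * n ^ d ↔
    Even n ∧ ∃ r : Fin d, ∃ ε : ℕ, ε < 2 ∧
      ∀ x : Fin d → ZMod n, L x = Letter.A ↔ (x r).val % 2 = ε := by
  rcases Nat.eq_zero_or_pos d with rfl | hd
  · refine iff_of_false ?_ fun ⟨_, r, _⟩ => r.elim0
    rw [Finset.filter_false_of_mem fun p _ h => h.2.1 (Subsingleton.elim _ _)]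
    simp
  rw [card_eq_iff_sum_kingBox_autocorr_eq hn hd L,
    sum_kingBox_autocorr_eq_iff hn (labelSign_eq_one_or_neg_one L)]
  simp only [labelSign_eq_mul_parity_iff]
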